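/- Let μ1, μ2 be nonzero real numbers and set μ3 = μ1, μ4 = μ2, and let θ2 ∈ (0, 2π) be such that the four angles 0, θ2, 2θ2, 3θ2 are pairwise distinct modulo 2π. Then (0, θ2, 2θ2, 3θ2) is a critical point of V if and only if θ2 = π/2 or θ2 = 3π/2. (With μ3 = μ1 and μ4 = μ2, the only equally spaced configurations are square configurations.) -/

import Mathlib

open Real Polynomial

/-- The potential `V` for the (1+4)-vortex problem with circulation
parameters `μ` and angular positions `θ`. -/
noncomputable def V (μ θ : Fin 4 → ℝ) : ℝ :=
  -∑ i : Fin 4, ∑ j ∈ Finset.Ioi i,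
      μ i * μ j *
        (Real.cos (θ i - θ j) + (1 / 2) * Real.log (2 - 2 * Real.cos (θ i - θ j)))

/-- The partial derivative `∂V/∂θ_k` at the point `θ`. -/
noncomputable def partialV (μ θ : Fin 4 → ℝ) (k : Fin 4) : ℝ :=
  deriv (fun t => V μ (Function.update θ k t)) (θ k)

/-- `θ` is a critical point of `V`: all four partial derivatives vanish. -/
def IsCriticalPt (μ θ : Fin 4 → ℝ) : Prop :=
  ∀ k : Fin 4, partialV μ θ k = 0

/-- The Hessian matrix of `V` at `θ`, `H k l = ∂²V/∂θ_k ∂θ_l`. -/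
noncomputable def hessV (μ θ : Fin 4 → ℝ) : Matrix (Fin 4) (Fin 4) ℝ :=
  fun k l => deriv (fun t => partialV μ (Function.update θ k t) l) (θ k)

/-!
With `f x = cos x + log (2 - 2 cos x) / 2` we have `V = -∑_{i<j} μᵢ μⱼ f (θᵢ - θⱼ)`, and
`f' x = sin x (2 cos x - 1) / (2 - 2 cos x)` is odd. For masses `(a, b, a, b)` at
`(0, t, 2t, 3t)` the gradient of `V` is
`(ab (f' t + f' 3t) + a² f' 2t, b² f' 2t, -a² f' 2t, -(ab (f' t + f' 3t) + b² f' 2t))`,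
so criticality means `f' 2t = 0` and `f' t + f' 3t = 0`. The first forces `cos t = 0` or
`4 cos² t = 3`, and in the latter case
`f' t + f' 3t = sin t (4 cos t - 3) / (2 - 2 cos t) ≠ 0`.
-/

noncomputable def pairPotential (x : ℝ) : ℝ :=
  Real.cos x + (1 / 2) * Real.log (2 - 2 * Real.cos x)

noncomputable def pairPotentialDeriv (x : ℝ) : ℝ :=
  Real.sin x * (2 * Real.cos x - 1) / (2 - 2 * Real.cos x)

lemma pairPotentialDeriv_neg (x : ℝ) : pairPotentialDeriv (-x) = -pairPotentialDeriv x := by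
  simp only [pairPotentialDeriv, Real.sin_neg, Real.cos_neg, neg_mul, neg_div]

lemma hasDerivAt_pairPotential {x : ℝ} (hx : Real.cos x ≠ 1) :
    HasDerivAt pairPotential (pairPotentialDeriv x) x := by
  have hpos : 0 < 2 - 2 * Real.cos x := by
    linarith [lt_of_le_of_ne (Real.cos_le_one x) hx]
  have hlog : HasDerivAt (fun y => Real.log (2 - 2 * Real.cos y))
      (2 * Real.sin x / (2 - 2 * Real.cos x)) x := by
    simpa using (((Real.hasDerivAt_cos x).const_mul 2).const_sub 2).log hpos.ne'
  refine ((Real.hasDerivAt_cos x).add (hlog.const_mul (1 / 2))).congr_deriv ?_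
  rw [pairPotentialDeriv]
  field_simp
  ring

lemma hasDerivAt_V_update (μ θ : Fin 4 → ℝ) (k : Fin 4)
    (hθ : ∀ i j, i ≠ j → Real.cos (θ i - θ j) ≠ 1) :
    HasDerivAt (fun t => V μ (Function.update θ k t))
      (-∑ i : Fin 4, ∑ j ∈ Finset.Ioi i, μ i * μ j *
        (((Pi.single k 1 : Fin 4 → ℝ) i - (Pi.single k 1 : Fin 4 → ℝ) j) *
          pairPotentialDeriv (θ i - θ j))) (θ k) := by
  have hupd := hasDerivAt_pi.1 (hasDerivAt_update θ k (θ k))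
  refine (HasDerivAt.fun_sum fun i _ => HasDerivAt.fun_sum fun j hj => ?_).neg
  have hij : i ≠ j := (Finset.mem_Ioi.1 hj).ne
  have hpair := HasDerivAt.comp_of_eq _ (hasDerivAt_pairPotential (hθ i j hij))
    ((hupd i).fun_sub (hupd j)) (by simp)
  exact (hpair.const_mul (μ i * μ j)).congr_deriv (by rw [mul_comm (pairPotentialDeriv _)])

lemma partialV_equallySpaced (a b t : ℝ)
    (hθ : ∀ i j, i ≠ j → Real.cos ((![0, t, 2 * t, 3 * t] : Fin 4 → ℝ) i -
      (![0, t, 2 * t, 3 * t] : Fin 4 → ℝ) j) ≠ 1) :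
    partialV ![a, b, a, b] ![0, t, 2 * t, 3 * t] =
      ![a * b * (pairPotentialDeriv t + pairPotentialDeriv (3 * t)) +
          a * a * pairPotentialDeriv (2 * t),
        b * b * pairPotentialDeriv (2 * t),
        -(a * a * pairPotentialDeriv (2 * t)),
        -(a * b * (pairPotentialDeriv t + pairPotentialDeriv (3 * t)) +
          b * b * pairPotentialDeriv (2 * t))] := by
  have hIoi : Finset.Ioi (0 : Fin 4) = {1, 2, 3} ∧ Finset.Ioi (1 : Fin 4) = {2, 3} ∧
      Finset.Ioi (2 : Fin 4) = {3} ∧ Finset.Ioi (3 : Fin 4) = ∅ := by decide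
  have hdiff : t - 2 * t = -t ∧ t - 3 * t = -(2 * t) ∧ 2 * t - 3 * t = -t := by
    refine ⟨?_, ?_, ?_⟩ <;> ring
  ext k
  rw [partialV, (hasDerivAt_V_update _ _ k hθ).deriv]
  fin_cases k <;>
    simp only [Fin.sum_univ_four, hIoi, Finset.sum_insert, Finset.sum_singleton, Finset.sum_empty,
      Finset.mem_insert, Finset.mem_singleton, Pi.single_apply, Matrix.cons_val, Fin.isValue,
      Fin.reduceFinMk, Fin.zero_eta, Fin.mk_one, Fin.reduceEq, zero_ne_one, one_ne_zero, or_self,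
      not_false_eq_true, ↓reduceIte, zero_sub, sub_zero, hdiff, pairPotentialDeriv_neg] <;>
    ring

lemma isCriticalPt_equallySpaced_iff {a b : ℝ} (ha : a ≠ 0) (hb : b ≠ 0) (t : ℝ)
    (hθ : ∀ i j, i ≠ j → Real.cos ((![0, t, 2 * t, 3 * t] : Fin 4 → ℝ) i -
      (![0, t, 2 * t, 3 * t] : Fin 4 → ℝ) j) ≠ 1) :
    IsCriticalPt ![a, b, a, b] ![0, t, 2 * t, 3 * t] ↔
      pairPotentialDeriv (2 * t) = 0 ∧ pairPotentialDeriv t + pairPotentialDeriv (3 * t) = 0 := by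
  have hpartial := congrFun (partialV_equallySpaced a b t hθ)
  constructor
  · intro hcrit
    have h2 : pairPotentialDeriv (2 * t) = 0 := by simpa [hpartial, hb] using hcrit 1
    exact ⟨h2, by simpa [hpartial, h2, ha, hb] using hcrit 0⟩
  · rintro ⟨h2, h13⟩ k
    fin_cases k <;> simp [hpartial, h2, h13]

lemma pairPotentialDeriv_two_mul_eq_zero_iff {x : ℝ} (hx : Real.cos (2 * x) ≠ 1) :
    pairPotentialDeriv (2 * x) = 0 ↔ Real.cos x = 0 ∨ 4 * Real.cos x ^ 2 = 3 := by
  have hden : 2 - 2 * Real.cos (2 * x) ≠ 0 := fun h => hx (by linarith)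
  have hsin : Real.sin x ≠ 0 := fun h => hx (by rw [Real.cos_two_mul, Real.cos_sq', h]; ring)
  have hnum : Real.sin (2 * x) * (2 * Real.cos (2 * x) - 1) =
      2 * Real.sin x * (Real.cos x * (4 * Real.cos x ^ 2 - 3)) := by
    rw [Real.sin_two_mul, Real.cos_two_mul]; ring
  rw [pairPotentialDeriv, div_eq_zero_iff, or_iff_left hden, hnum]
  simp [hsin, sub_eq_zero]

lemma pairPotentialDeriv_add_three_mul_ne_zero {x : ℝ} (hx : 4 * Real.cos x ^ 2 = 3) :
    pairPotentialDeriv x + pairPotentialDeriv (3 * x) ≠ 0 := by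
  have hsin_sq : Real.sin x ^ 2 = 1 / 4 := by nlinarith [Real.sin_sq_add_cos_sq x]
  have hcos3 : Real.cos (3 * x) = 0 := by
    rw [Real.cos_three_mul]; linear_combination Real.cos x * hx
  have hsin3 : Real.sin (3 * x) = 2 * Real.sin x := by
    rw [Real.sin_three_mul]; linear_combination (-4 * Real.sin x) * hsin_sq
  have hden : 2 - 2 * Real.cos x ≠ 0 := fun h => by nlinarith
  have hsum : pairPotentialDeriv x + pairPotentialDeriv (3 * x) =
      Real.sin x * (4 * Real.cos x - 3) / (2 - 2 * Real.cos x) := by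
    rw [pairPotentialDeriv, pairPotentialDeriv, hsin3, hcos3, eq_div_iff hden, add_mul,
      div_mul_cancel₀ _ hden]
    ring
  have hsin : Real.sin x ≠ 0 := fun h => by norm_num [h] at hsin_sq
  have hcos : 4 * Real.cos x - 3 ≠ 0 := fun h => by nlinarith
  rw [hsum]
  exact div_ne_zero (mul_ne_zero hsin hcos) hden

lemma pairPotentialDeriv_of_cos_eq_zero {x : ℝ} (hx : Real.cos x = 0) :
    pairPotentialDeriv (2 * x) = 0 ∧ pairPotentialDeriv x + pairPotentialDeriv (3 * x) = 0 := by
  have hsin2 : Real.sin (2 * x) = 0 := by rw [Real.sin_two_mul, hx, mul_zero]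
  have hsin_sq : Real.sin x ^ 2 = 1 := by nlinarith [Real.sin_sq_add_cos_sq x]
  have hcos3 : Real.cos (3 * x) = 0 := by rw [Real.cos_three_mul, hx]; ring
  have hsin3 : Real.sin (3 * x) = -Real.sin x := by
    rw [Real.sin_three_mul]; linear_combination (-4 * Real.sin x) * hsin_sq
  refine ⟨by rw [pairPotentialDeriv, hsin2, zero_mul, zero_div], ?_⟩
  rw [pairPotentialDeriv, pairPotentialDeriv, hsin3, hcos3, hx]; ring

lemma pairPotentialDeriv_equallySpaced_eq_zero_iff {x : ℝ} (hx : Real.cos (2 * x) ≠ 1) :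
    (pairPotentialDeriv (2 * x) = 0 ∧ pairPotentialDeriv x + pairPotentialDeriv (3 * x) = 0) ↔
      Real.cos x = 0 := by
  refine ⟨fun ⟨h2, h13⟩ => ?_, pairPotentialDeriv_of_cos_eq_zero⟩
  rcases (pairPotentialDeriv_two_mul_eq_zero_iff hx).1 h2 with hcos | hcos
  · exact hcos
  · exact absurd h13 (pairPotentialDeriv_add_three_mul_ne_zero hcos)

lemma cos_eq_zero_iff_of_mem_Ioo_zero_two_pi {x : ℝ} (hx : x ∈ Set.Ioo 0 (2 * π)) :
    Real.cos x = 0 ↔ x = π / 2 ∨ x = 3 * π / 2 := by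
  constructor
  · intro hcos
    obtain ⟨k, rfl⟩ := Real.cos_eq_zero_iff.1 hcos
    obtain ⟨hlo, hhi⟩ := hx
    have hk : k = 0 ∨ k = 1 := by
      have hlo' : (0 : ℝ) < 2 * k + 1 := by nlinarith [Real.pi_pos]
      have hhi' : (2 * k + 1 : ℝ) < 4 := by nlinarith [Real.pi_pos]
      have hlo'' : (0 : ℤ) < 2 * k + 1 := by exact_mod_cast hlo'
      have hhi'' : 2 * k + 1 < (4 : ℤ) := by exact_mod_cast hhi'
      omega
    rcases hk with rfl | rfl
    · left; push_cast; ring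
    · right; push_cast; ring
  · rintro (rfl | rfl)
    · exact Real.cos_pi_div_two
    · exact Real.cos_eq_zero_iff.2 ⟨(1 : ℤ), by push_cast; ring⟩

/-- With `mu3 = mu1` and `mu4 = mu2`, the only equally spaced configurations
are squares: `theta2 = pi/2` or `theta2 = 3pi/2`. -/
theorem trapezoid_equal_pairs_is_square (μ1 μ2 θ2 : ℝ)
    (h1 : μ1 ≠ 0) (h2 : μ2 ≠ 0)
    (hθ : θ2 ∈ Set.Ioo (0 : ℝ) (2 * π))
    (hdist : ∀ i j : Fin 4, i ≠ j → ∀ n : ℤ,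
      (![0, θ2, 2 * θ2, 3 * θ2] : Fin 4 → ℝ) i -
        (![0, θ2, 2 * θ2, 3 * θ2] : Fin 4 → ℝ) j ≠ 2 * π * n) :
    IsCriticalPt ![μ1, μ2, μ1, μ2] ![0, θ2, 2 * θ2, 3 * θ2] ↔
      θ2 = π / 2 ∨ θ2 = 3 * π / 2 := by
  have hcos : ∀ i j, i ≠ j → Real.cos ((![0, θ2, 2 * θ2, 3 * θ2] : Fin 4 → ℝ) i -
      (![0, θ2, 2 * θ2, 3 * θ2] : Fin 4 → ℝ) j) ≠ 1 := by
    intro i j hij hcos_eq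
    obtain ⟨n, hn⟩ := (Real.cos_eq_one_iff _).1 hcos_eq
    exact hdist i j hij n (by rw [← hn]; ring)
  have hcos_two_mul : Real.cos (2 * θ2) ≠ 1 := by simpa using hcos 2 0 (by decide)
  rw [isCriticalPt_equallySpaced_iff h1 h2 θ2 hcos,
    pairPotentialDeriv_equallySpaced_eq_zero_iff hcos_two_mul,
    cos_eq_zero_iff_of_mem_Ioo_zero_two_pi hθ]
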